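/- Define h(a,b) := 1(a > b) + (1/2)·1(a = b). Let (c_i, c_j) be a pair of integrable, strictly positive random variables such that the ratio c_i / c_j has full support on (0, ∞) (every nonempty open interval has positive probability). Let π_i, π_j > 0 and define Φ(r) := E[π_i c_j h(c_i/c_j, r) + π_j c_i h(r, c_i/c_j)] for r > 0. Then for every r ≠ π_i / π_j, Φ(r) > Φ(π_i / π_j). -/
import Mathlib


open MeasureTheory

/-- `hfun a b = 1(a > b) + (1/2)·1(a = b)`. -/
noncomputable def hfun (a b : ℝ) : ℝ :=
  (if b < a then 1 else 0) + (1 / 2) * (if a = b then 1 else 0)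

lemma hfun_nonneg (a b : ℝ) : 0 ≤ hfun a b := by
  unfold hfun; split_ifs <;> norm_num

lemma hfun_le_one (a b : ℝ) : hfun a b ≤ 1 := by
  unfold hfun; split_ifs <;> simp_all; linarith

lemma hfun_add (a b : ℝ) : hfun a b + hfun b a = 1 := by
  unfold hfun
  rcases lt_trichotomy a b with h | h | h
  · simp [h, h.ne, h.ne', not_lt.2 h.le]
  · subst h; norm_num
  · simp [h, h.ne, h.ne', not_lt.2 h.le]

lemma sign_key (r s x : ℝ) : 0 ≤ (s - x) * (hfun x r - hfun x s) := by
  unfold hfun; split_ifs <;> nlinarith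

/-- **Strict pairwise Bayes-risk minimization.** Let `(ci, cj)` be integrable,
strictly positive random variables whose ratio `ci / cj` has full support on
`(0, ∞)` (every nonempty open interval has positive probability), let
`pii, pij > 0`, and let
`Φ(r) = E[pii · cj · h(ci/cj, r) + pij · ci · h(r, ci/cj)]`.
Then for every `r > 0` with `r ≠ pii / pij`, `Φ(pii / pij) < Φ(r)`. -/
theorem pairwise_bayes_strict {Ω : Type*} [MeasurableSpace Ω] (μ : Measure Ω)
    [IsProbabilityMeasure μ] (ci cj : Ω → ℝ)
    (hcimeas : Measurable ci) (hcjmeas : Measurable cj)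
    (hcipos : ∀ ω, 0 < ci ω) (hcjpos : ∀ ω, 0 < cj ω)
    (hciint : Integrable ci μ) (hcjint : Integrable cj μ)
    (hsupp : ∀ a b : ℝ, 0 < a → a < b → 0 < μ {ω | ci ω / cj ω ∈ Set.Ioo a b})
    (pii pij : ℝ) (hpii : 0 < pii) (hpij : 0 < pij)
    (Φ : ℝ → ℝ)
    (hΦ : ∀ r : ℝ, Φ r =
      ∫ ω, (pii * cj ω * hfun (ci ω / cj ω) r + pij * ci ω * hfun r (ci ω / cj ω)) ∂μ)
    (r : ℝ) (hr : 0 < r) (hne : r ≠ pii / pij) :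
    Φ (pii / pij) < Φ r := by
  set s : ℝ := pii / pij with hs_def
  have hs : 0 < s := div_pos hpii hpij
  set ρ : Ω → ℝ := fun ω => ci ω / cj ω with hρ_def
  have hρmeas : Measurable ρ := hcimeas.div hcjmeas
  set F : ℝ → Ω → ℝ := fun t ω =>
    pii * cj ω * hfun (ρ ω) t + pij * ci ω * hfun t (ρ ω) with hF_def
  have hmeas1 : ∀ t : ℝ, Measurable fun ω => hfun (ρ ω) t := by
    intro t; unfold hfun
    apply Measurable.add
    · exact Measurable.ite (measurableSet_lt measurable_const hρmeas)
        measurable_const measurable_const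
    · exact measurable_const.mul (Measurable.ite
        (measurableSet_eq_fun hρmeas measurable_const) measurable_const measurable_const)
  have hmeas2 : ∀ t : ℝ, Measurable fun ω => hfun t (ρ ω) := by
    intro t; unfold hfun
    apply Measurable.add
    · exact Measurable.ite (measurableSet_lt hρmeas measurable_const)
        measurable_const measurable_const
    · exact measurable_const.mul (Measurable.ite
        (measurableSet_eq_fun measurable_const hρmeas) measurable_const measurable_const)
  have hint : ∀ t : ℝ, Integrable (F t) μ := by
    intro t
    have h1 : Integrable (fun ω => pii * cj ω * hfun (ρ ω) t) μ := by
      refine Integrable.mono' (hcjint.const_mul pii) ?_ ?_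
      · exact ((measurable_const.mul hcjmeas).mul (hmeas1 t)).aestronglyMeasurable
      · filter_upwards with ω
        have h0 := hfun_nonneg (ρ ω) t
        have h1 := hfun_le_one (ρ ω) t
        have hc := (hcjpos ω).le
        rw [Real.norm_eq_abs, abs_of_nonneg (by positivity)]
        nlinarith [mul_le_mul_of_nonneg_left h1 (mul_nonneg hpii.le hc)]
    have h2 : Integrable (fun ω => pij * ci ω * hfun t (ρ ω)) μ := by
      refine Integrable.mono' (hciint.const_mul pij) ?_ ?_
      · exact ((measurable_const.mul hcimeas).mul (hmeas2 t)).aestronglyMeasurable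
      · filter_upwards with ω
        have h0 := hfun_nonneg t (ρ ω)
        have h1 := hfun_le_one t (ρ ω)
        have hc := (hcipos ω).le
        rw [Real.norm_eq_abs, abs_of_nonneg (by positivity)]
        nlinarith [mul_le_mul_of_nonneg_left h1 (mul_nonneg hpij.le hc)]
    exact h1.add h2
  have hkey : ∀ ω, F r ω - F s ω =
      pij * cj ω * ((s - ρ ω) * (hfun (ρ ω) r - hfun (ρ ω) s)) := by
    intro ω
    have h1 : hfun r (ρ ω) = 1 - hfun (ρ ω) r := by
      have := hfun_add (ρ ω) r; linarith
    have h2 : hfun s (ρ ω) = 1 - hfun (ρ ω) s := by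
      have := hfun_add (ρ ω) s; linarith
    have hcj := (hcjpos ω).ne'
    have hci : ci ω = ρ ω * cj ω := by
      rw [hρ_def]; field_simp
    have hpii' : pii = pij * s := by
      rw [hs_def]; field_simp
    simp only [hF_def, h1, h2]
    rw [hci, hpii']; ring
  have hG : Integrable (fun ω => F r ω - F s ω) μ := (hint r).sub (hint s)
  have hnonneg : 0 ≤ᵐ[μ] fun ω => F r ω - F s ω := by
    filter_upwards with ω
    rw [hkey ω]
    exact mul_nonneg (mul_nonneg hpij.le (hcjpos ω).le) (sign_key r s (ρ ω))
  have hsuppin : ∃ a b : ℝ, 0 < a ∧ a < b ∧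
      {ω | ρ ω ∈ Set.Ioo a b} ⊆ Function.support fun ω => F r ω - F s ω := by
    rcases hne.lt_or_gt with hlt | hlt
    · refine ⟨r, s, hr, hlt, fun ω hx => ?_⟩
      simp only [Set.mem_setOf_eq, Set.mem_Ioo] at hx
      have e1 : hfun (ρ ω) r = 1 := by
        simp [hfun, hx.1, hx.1.ne']
      have e2 : hfun (ρ ω) s = 0 := by
        simp [hfun, not_lt.2 hx.2.le, hx.2.ne]
      have : F r ω - F s ω = pij * cj ω * ((s - ρ ω) * 1) := by
        rw [hkey ω, e1, e2]; ring_nf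
      rw [Function.mem_support, this]
      exact ne_of_gt (mul_pos (mul_pos hpij (hcjpos ω)) (by nlinarith [hx.2]))
    · refine ⟨s, r, hs, hlt, fun ω hx => ?_⟩
      simp only [Set.mem_setOf_eq, Set.mem_Ioo] at hx
      have e1 : hfun (ρ ω) r = 0 := by
        simp [hfun, not_lt.2 hx.2.le, hx.2.ne]
      have e2 : hfun (ρ ω) s = 1 := by
        simp [hfun, hx.1, hx.1.ne']
      have : F r ω - F s ω = pij * cj ω * ((s - ρ ω) * (0 - 1)) := by
        rw [hkey ω, e1, e2]
      rw [Function.mem_support, this]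
      exact ne_of_gt (mul_pos (mul_pos hpij (hcjpos ω)) (by nlinarith [hx.1]))
  obtain ⟨a, b, ha, hab, hsub⟩ := hsuppin
  have hposset : 0 < μ (Function.support fun ω => F r ω - F s ω) :=
    lt_of_lt_of_le (hsupp a b ha hab) (measure_mono hsub)
  have hpos : 0 < ∫ ω, (F r ω - F s ω) ∂μ :=
    (integral_pos_iff_support_of_nonneg_ae hnonneg hG).2 hposset
  rw [integral_sub (hint r) (hint s)] at hpos
  have : Φ r = ∫ ω, F r ω ∂μ := hΦ r
  have hΦs : Φ s = ∫ ω, F s ω ∂μ := hΦ s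
  linarith
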